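/- Let ε ∈ (0, 0.1) and r ∈ (0, 0.1), let f : ℝ → ℝ be either f(z) = exp(z) or f(z) = cosh(z), and let A, B ∈ ℝ^{n×n} be symmetric positive semidefinite matrices with ‖A‖_∞ ≤ r (every entry of A has absolute value at most r) and (1-ε)B ⪯ A ⪯ (1+ε)B in the Loewner order. Then ‖D(A)^{-1} f(A) - D(B)^{-1} f(B)‖_∞ ≤ 4 · (1 + ε + 2r) · r, where D(M) := diag(f(M)·1_n) and ‖M‖_∞ is the maximum absolute value of the entries of M. -/

import Mathlib

/-!
Only the sizes of the entries matter. Every entry of `A` has modulus at most `r`, and the lower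
Loewner bound gives `(1 - ε) B i i ≤ A i i ≤ r`, which for positive semidefinite `B` bounds every
entry of `B` by `r / (1 - ε)`. If all entries of `M` have modulus at most `m`, the entries of
`f(M)` lie in `[e^{-m}, e^m]`, so every entry of `D(M)⁻¹ f(M)` lies within `(e^{2m} - 1) / n` of
the uniform weight `1 / n`. Comparing both attention matrices with the uniform one and expanding
`e^{2r}` and `e^{2r/(1-ε)}` to second order gives the bound.
-/

open Matrix

/-- The diagonal normalization matrix `D(M) = diag(f(M) 1_n)`. -/
noncomputable def attnDiag {n : ℕ} (f : ℝ → ℝ) (M : Matrix (Fin n) (Fin n) ℝ) :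
    Matrix (Fin n) (Fin n) ℝ :=
  Matrix.diagonal (fun i => ∑ j, f (M i j))

/-- The `ℓ∞`-norm of a matrix: the maximum absolute value of its entries. -/
noncomputable def entryInfNorm {n : ℕ} (M : Matrix (Fin n) (Fin n) ℝ) : ℝ :=
  ⨆ i, ⨆ j, |M i j|

namespace Matrix.PosSemidef

variable {n : Type*} {M : Matrix n n ℝ}

theorem two_mul_abs_apply_le [Fintype n] [DecidableEq n] (hM : M.PosSemidef) (i j : n) :
    2 * |M i j| ≤ M i i + M j j := by
  have hsymm : M j i = M i j := by simpa using hM.isHermitian.apply i j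
  have quad (s : ℝ) : 0 ≤ M i i + 2 * s * M i j + s ^ 2 * M j j := by
    have := hM.dotProduct_mulVec_nonneg (Pi.single i 1 + Pi.single j s)
    simp only [star_trivial, mulVec_add, mulVec_single, MulOpposite.op_one, one_smul,
      op_smul_eq_smul, dotProduct_add, add_dotProduct, single_dotProduct, col_apply, one_mul, hsymm,
      dotProduct_smul, smul_eq_mul] at this
    linarith
  have h₁ := quad 1
  have h₂ := quad (-1)
  rw [← abs_two, ← abs_mul, abs_le]
  constructor <;> linarith

theorem abs_apply_le_of_diag_le [Fintype n] [DecidableEq n] (hM : M.PosSemidef) {c : ℝ}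
    (hc : ∀ i, M i i ≤ c) (i j : n) : |M i j| ≤ c := by
  linarith [hM.two_mul_abs_apply_le i j, hc i, hc j]

theorem mul_diag_le_diag {A : Matrix n n ℝ} {t : ℝ} (h : (A - t • M).PosSemidef) (i : n) :
    t * M i i ≤ A i i := by
  simpa [sub_nonneg] using h.diag_nonneg (i := i)

end Matrix.PosSemidef

open Real Finset

theorem abs_apply_le_entryInfNorm {n : ℕ} (M : Matrix (Fin n) (Fin n) ℝ) (i j : Fin n) :
    |M i j| ≤ entryInfNorm M :=
  (le_ciSup (Set.finite_range fun b => |M i b|).bddAbove j).trans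
    (le_ciSup (Set.finite_range fun a => ⨆ b, |M a b|).bddAbove i)

theorem entryInfNorm_le {n : ℕ} {M : Matrix (Fin n) (Fin n) ℝ} {c : ℝ} (hc : 0 ≤ c)
    (h : ∀ i j, |M i j| ≤ c) : entryInfNorm M ≤ c :=
  Real.iSup_le (fun i => Real.iSup_le (h i) hc) hc

theorem attnDiag_inv_mul_map_apply {n : ℕ} {f : ℝ → ℝ} {M : Matrix (Fin n) (Fin n) ℝ}
    (hM : ∀ i, ∑ k, f (M i k) ≠ 0) (i j : Fin n) :
    ((attnDiag f M)⁻¹ * M.map f) i j = f (M i j) / ∑ k, f (M i k) := by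
  have hinv : (attnDiag f M)⁻¹ = diagonal fun i => (∑ k, f (M i k))⁻¹ := by
    refine inv_eq_right_inv ?_
    rw [attnDiag, diagonal_mul_diagonal, ← diagonal_one]
    exact congrArg diagonal (funext fun i => mul_inv_cancel₀ (hM i))
  rw [hinv, diagonal_mul, map_apply, inv_mul_eq_div]

theorem abs_div_sum_sub_inv_card_le {ι : Type*} [Fintype ι] {x : ι → ℝ} {a b : ℝ} (ha : 0 < a)
    (hx : ∀ k, x k ∈ Set.Icc a b) (j : ι) :
    |x j / ∑ k, x k - (Fintype.card ι : ℝ)⁻¹| ≤ (b / a - 1) / Fintype.card ι := by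
  have hn : (0 : ℝ) < Fintype.card ι := by exact_mod_cast Fintype.card_pos_iff.2 ⟨j⟩
  have hab : a ≤ b := (hx j).1.trans (hx j).2
  have hb : 0 < b := ha.trans_le hab
  have hsum_ge : Fintype.card ι * a ≤ ∑ k, x k := by
    simpa using card_nsmul_le_sum univ x a fun k _ => (hx k).1
  have hsum_le : ∑ k, x k ≤ Fintype.card ι * b := by
    simpa using sum_le_card_nsmul univ x b fun k _ => (hx k).2
  have hs : 0 < ∑ k, x k := (mul_pos hn ha).trans_le hsum_ge
  have hupper : x j / ∑ k, x k ≤ b / a / Fintype.card ι := by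
    rw [div_le_div_iff₀ hs hn, div_mul_eq_mul_div, le_div_iff₀ ha]
    nlinarith [mul_le_mul_of_nonneg_right (hx j).2 (mul_pos hn ha).le]
  have hlower : a / b / Fintype.card ι ≤ x j / ∑ k, x k := by
    rw [div_le_div_iff₀ hn hs, div_mul_eq_mul_div, div_le_iff₀ hb]
    nlinarith [mul_le_mul_of_nonneg_right (hx j).1 (mul_pos hn hb).le]
  -- `1 - a / b ≤ b / a - 1` is AM-GM for `a / b` and `b / a`
  have hamgm : 1 - a / b ≤ b / a - 1 := by
    rw [div_sub_one ha.ne', one_sub_div hb.ne', div_le_div_iff₀ hb ha]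
    nlinarith [sq_nonneg (b - a)]
  rw [abs_sub_le_iff, ← one_div]
  constructor
  · calc x j / ∑ k, x k - 1 / Fintype.card ι ≤ b / a / Fintype.card ι - 1 / Fintype.card ι := by
          linarith
      _ = (b / a - 1) / Fintype.card ι := by ring
  · calc 1 / Fintype.card ι - x j / ∑ k, x k ≤ (1 - a / b) / Fintype.card ι := by
          rw [sub_div]; linarith
      _ ≤ (b / a - 1) / Fintype.card ι := by gcongr

theorem apply_mem_Icc_exp_of_abs_le {f : ℝ → ℝ} (hf : f = exp ∨ f = cosh) {x m : ℝ}
    (hx : |x| ≤ m) : f x ∈ Set.Icc (exp (-m)) (exp m) := by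
  obtain ⟨hmx, hxm⟩ := abs_le.1 hx
  rcases hf with rfl | rfl
  · exact ⟨exp_le_exp.2 hmx, exp_le_exp.2 hxm⟩
  · refine ⟨(exp_le_one_iff.2 (by linarith [abs_nonneg x])).trans (one_le_cosh x), ?_⟩
    rw [cosh_eq]
    linarith [exp_le_exp.2 hxm, exp_le_exp.2 (neg_le.1 hmx)]

theorem abs_attn_apply_sub_inv_le {n : ℕ} {f : ℝ → ℝ} (hf : f = exp ∨ f = cosh)
    {M : Matrix (Fin n) (Fin n) ℝ} {m : ℝ} (hM : ∀ i j, |M i j| ≤ m) (i j : Fin n) :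
    |((attnDiag f M)⁻¹ * M.map f) i j - (n : ℝ)⁻¹| ≤ (exp (2 * m) - 1) / n := by
  have hbounds (i k : Fin n) := apply_mem_Icc_exp_of_abs_le hf (hM i k)
  have hsum (i' : Fin n) : ∑ k, f (M i' k) ≠ 0 :=
    (sum_pos (fun k _ => (exp_pos (-m)).trans_le (hbounds i' k).1) ⟨i, mem_univ i⟩).ne'
  have h := abs_div_sum_sub_inv_card_le (exp_pos (-m)) (hbounds i) j
  rwa [Fintype.card_fin, ← exp_sub, sub_neg_eq_add, ← two_mul,
    ← attnDiag_inv_mul_map_apply hsum] at h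

theorem exp_sub_one_add_exp_sub_one_le {ε r : ℝ} (hε : ε ∈ Set.Ioo (0 : ℝ) 0.1)
    (hr : r ∈ Set.Ioo (0 : ℝ) 0.1) :
    (exp (2 * r) - 1) + (exp (2 * (r / (1 - ε))) - 1) ≤ 4 * (1 + ε + 2 * r) * r := by
  obtain ⟨hε0, hε1⟩ := hε
  obtain ⟨hr0, hr1⟩ := hr
  norm_num at hε1 hr1
  set m := r / (1 - ε) with hm
  have hmr : m * (1 - ε) = r := div_mul_cancel₀ r (by linarith)
  have hm0 : 0 < m := div_pos hr0 (by linarith)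
  have hm1 : m ≤ 1 / 9 := by rw [hm, div_le_iff₀ (by linarith)]; linarith
  have exp_sub_one_le {x : ℝ} (hx : |x| ≤ 1) : exp x - 1 ≤ x + x ^ 2 := by
    linarith [(abs_le.1 (abs_exp_sub_one_sub_id_le hx)).2]
  have h₁ := exp_sub_one_le (x := 2 * r) (by rw [abs_le]; constructor <;> linarith)
  have h₂ := exp_sub_one_le (x := 2 * m) (by rw [abs_le]; constructor <;> linarith)
  rw [← hmr] at h₁ ⊢
  nlinarith [mul_pos hm0 hε0, mul_pos (mul_pos hm0 hε0) hm0, mul_pos (mul_pos hm0 hε0) hε0,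
    mul_pos (mul_pos (mul_pos hm0 hε0) hε0) hm0]

theorem attention_error_from_loewner_perturbation_general {n : ℕ} (ε r : ℝ)
    (hε : ε ∈ Set.Ioo (0 : ℝ) 0.1) (hr : r ∈ Set.Ioo (0 : ℝ) 0.1)
    (f : ℝ → ℝ) (hf : f = Real.exp ∨ f = Real.cosh)
    (A B : Matrix (Fin n) (Fin n) ℝ)
    (hB : B.PosSemidef)
    (hAr : entryInfNorm A ≤ r)
    (hlow : (A - (1 - ε) • B).PosSemidef) :
    entryInfNorm ((attnDiag f A)⁻¹ * A.map f - (attnDiag f B)⁻¹ * B.map f) ≤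
      4 * (1 + ε + 2 * r) * r := by
  have hε₁ : 0 < 1 - ε := by linarith [hε.2]
  have hA (i j : Fin n) : |A i j| ≤ r := (abs_apply_le_entryInfNorm A i j).trans hAr
  have hB' : ∀ i j, |B i j| ≤ r / (1 - ε) := hB.abs_apply_le_of_diag_le fun i => by
    rw [le_div_iff₀ hε₁, mul_comm]
    exact (hlow.mul_diag_le_diag i).trans (abs_le.1 (hA i i)).2
  refine entryInfNorm_le (mul_nonneg (by linarith [hε.1, hr.1]) hr.1.le) fun i j => ?_
  have hn : (1 : ℝ) ≤ n := by exact_mod_cast i.pos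
  have hexp {m : ℝ} (hm : 0 ≤ m) : 0 ≤ exp (2 * m) - 1 := sub_nonneg.2 (one_le_exp (by positivity))
  calc |((attnDiag f A)⁻¹ * A.map f - (attnDiag f B)⁻¹ * B.map f) i j|
      ≤ |((attnDiag f A)⁻¹ * A.map f) i j - (n : ℝ)⁻¹|
          + |((attnDiag f B)⁻¹ * B.map f) i j - (n : ℝ)⁻¹| :=
        (abs_sub_le _ (n : ℝ)⁻¹ _).trans_eq (by rw [abs_sub_comm (n : ℝ)⁻¹])
    _ ≤ (exp (2 * r) - 1) / n + (exp (2 * (r / (1 - ε))) - 1) / n :=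
        add_le_add (abs_attn_apply_sub_inv_le hf hA i j) (abs_attn_apply_sub_inv_le hf hB' i j)
    _ ≤ (exp (2 * r) - 1) + (exp (2 * (r / (1 - ε))) - 1) :=
        add_le_add (div_le_self (hexp hr.1.le) hn)
          (div_le_self (hexp (div_nonneg hr.1.le hε₁.le)) hn)
    _ ≤ 4 * (1 + ε + 2 * r) * r := exp_sub_one_add_exp_sub_one_le hε hr

theorem attention_error_from_loewner_perturbation {n : ℕ} (ε r : ℝ)
    (hε : ε ∈ Set.Ioo (0 : ℝ) 0.1) (hr : r ∈ Set.Ioo (0 : ℝ) 0.1)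
    (f : ℝ → ℝ) (hf : f = Real.exp ∨ f = Real.cosh)
    (A B : Matrix (Fin n) (Fin n) ℝ)
    (hA : A.PosSemidef) (hB : B.PosSemidef)
    (hAr : entryInfNorm A ≤ r)
    (hlow : (A - (1 - ε) • B).PosSemidef)
    (hupp : ((1 + ε) • B - A).PosSemidef) :
    entryInfNorm ((attnDiag f A)⁻¹ * A.map f - (attnDiag f B)⁻¹ * B.map f) ≤
      4 * (1 + ε + 2 * r) * r :=
  attention_error_from_loewner_perturbation_general ε r hε hr f hf A B hB hAr hlow
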